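/- Let X₁,…,Xₙ (n ≥ 2) be i.i.d. real random variables with variance σ² > 0, finite fourth central moment m₄, and kurtosis κ = m₄/σ⁴, and let S² be the unbiased sample variance (the square of the batch standard deviation σ_s = √S²). Then for every ε with 0 < ε < 1: Pr( 1/√(1+ε) ≤ σ/σ_s ≤ 1/√(1−ε) ) ≥ 1 − (1/ε²)·(κ/n − (n−3)/(n·(n−1))). -/

import Mathlib

/-!
The sample variance is invariant under shifts, so we may centre the sample. With
`A = ∑ Yᵢ²` and `B = ∑ Yᵢ` one has `(n - 1) S² = A - B² / n`, so `E[(S²)²]` is a combination of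
`E[A²]`, `E[A B²]` and `E[B⁴]`. Each of these is computed by adding the variables one at a time:
expand binomially in the new variable and factor the expectations by independence. This gives
`Var(S²) = m₄ / n - σ⁴ (n - 3) / (n (n - 1))`, and Chebyshev's inequality at distance `ε σ²`
concludes, since `|S² - σ²| < ε σ²` puts `σ / σ_s` in `[1 / √(1 + ε), 1 / √(1 - ε)]`.
-/

open MeasureTheory ProbabilityTheory Finset

lemma integrable_of_abs_le_pow {Ω : Type*} [MeasurableSpace Ω] {μ : Measure Ω}
    [IsFiniteMeasure μ] {B f : Ω → ℝ} {p d : ℕ} (hB : MemLp B p μ) (hd : d ≤ p)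
    (hf : AEStronglyMeasurable f μ) (hle : ∀ ω, |f ω| ≤ |B ω| ^ d) : Integrable f μ :=
  (hB.mono_exponent (by exact_mod_cast hd)).integrable_norm_pow'.mono' hf
    (ae_of_all _ fun ω => by simpa only [Real.norm_eq_abs] using hle ω)

section PowerSums

variable {Ω ι : Type*} [MeasurableSpace Ω] {μ : Measure Ω} {Y : ι → Ω → ℝ}

lemma integrable_sum_sq_pow_mul_sum_pow [IsFiniteMeasure μ] (hY : ∀ i, Measurable (Y i))
    (hY4 : ∀ i, MemLp (Y i) 4 μ) (s : Finset ι) {a b : ℕ} (hab : 2 * a + b ≤ 4) :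
    Integrable (fun ω => (∑ j ∈ s, Y j ω ^ 2) ^ a * (∑ j ∈ s, Y j ω) ^ b) μ := by
  refine integrable_of_abs_le_pow
    (memLp_finsetSum s (f := fun j ω => |Y j ω|) fun j _ => (hY4 j).abs) hab (by fun_prop)
    fun ω => ?_
  have habs : |(∑ j ∈ s, |Y j ω|)| = ∑ j ∈ s, |Y j ω| := abs_of_nonneg (by positivity)
  have hQ : |∑ j ∈ s, Y j ω ^ 2| ≤ (∑ j ∈ s, |Y j ω|) ^ 2 := by
    rw [abs_of_nonneg (by positivity)]
    simpa only [sq_abs] using sum_sq_le_sq_sum_of_nonneg (s := s) (f := fun j => |Y j ω|)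
      fun j _ => abs_nonneg _
  have hS : |∑ j ∈ s, Y j ω| ≤ ∑ j ∈ s, |Y j ω| := abs_sum_le_sum_abs _ _
  rw [habs, abs_mul, abs_pow, abs_pow, pow_add, pow_mul]
  gcongr

lemma indepFun_sum_sq_sum_of_notMem (hY : ∀ i, Measurable (Y i)) (hind : iIndepFun Y μ)
    {s : Finset ι} {i : ι} (hi : i ∉ s) :
    IndepFun (fun ω => (∑ j ∈ s, Y j ω ^ 2, ∑ j ∈ s, Y j ω)) (Y i) μ := by
  have hψ : Measurable fun v : ({i} : Finset ι) → ℝ => v ⟨i, mem_singleton_self i⟩ :=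
    measurable_pi_apply _
  have h := (hind.indepFun_finset s {i} (disjoint_singleton_right.2 hi) hY).comp
    (φ := fun v : s → ℝ => (∑ j, v j ^ 2, ∑ j, v j)) (by fun_prop) hψ
  convert h using 1
  ext ω
  · exact (sum_coe_sort s fun j => Y j ω ^ 2).symm
  · exact (sum_coe_sort s fun j => Y j ω).symm
  · rfl

lemma integral_sum_sq_pow_mul_sum_pow_mul_pow (hY : ∀ i, Measurable (Y i))
    (hind : iIndepFun Y μ) {s : Finset ι} {i : ι} (hi : i ∉ s) (a b k : ℕ) :
    ∫ ω, (∑ j ∈ s, Y j ω ^ 2) ^ a * (∑ j ∈ s, Y j ω) ^ b * Y i ω ^ k ∂μ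
      = (∫ ω, (∑ j ∈ s, Y j ω ^ 2) ^ a * (∑ j ∈ s, Y j ω) ^ b ∂μ) * ∫ ω, Y i ω ^ k ∂μ :=
  ((indepFun_sum_sq_sum_of_notMem hY hind hi).comp (φ := fun p : ℝ × ℝ => p.1 ^ a * p.2 ^ b)
    (ψ := fun y => y ^ k) (by fun_prop) (by fun_prop)).integral_mul_eq_mul_integral
    (by fun_prop) (by fun_prop)

lemma integral_insert_sum_sq_pow_mul_sum_pow [IsFiniteMeasure μ] [DecidableEq ι]
    (hY : ∀ i, Measurable (Y i)) (hY4 : ∀ i, MemLp (Y i) 4 μ) (hind : iIndepFun Y μ)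
    {s : Finset ι} {i : ι} (hi : i ∉ s) {a b : ℕ} (hab : 2 * a + b ≤ 4) :
    ∫ ω, (∑ j ∈ insert i s, Y j ω ^ 2) ^ a * (∑ j ∈ insert i s, Y j ω) ^ b ∂μ
      = ∑ p ∈ range (a + 1), ∑ q ∈ range (b + 1),
          (∫ ω, (∑ j ∈ s, Y j ω ^ 2) ^ p * (∑ j ∈ s, Y j ω) ^ q ∂μ)
            * (∫ ω, Y i ω ^ (2 * (a - p) + (b - q)) ∂μ) * (a.choose p * b.choose q) := by
  have hexpand : ∀ ω, (∑ j ∈ insert i s, Y j ω ^ 2) ^ a * (∑ j ∈ insert i s, Y j ω) ^ b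
      = ∑ p ∈ range (a + 1), ∑ q ∈ range (b + 1), (∑ j ∈ s, Y j ω ^ 2) ^ p
          * (∑ j ∈ s, Y j ω) ^ q * Y i ω ^ (2 * (a - p) + (b - q)) * (a.choose p * b.choose q) := by
    intro ω
    rw [sum_insert hi, sum_insert hi, add_comm (Y i ω ^ 2), add_pow, add_comm (Y i ω), add_pow,
      sum_mul_sum]
    exact sum_congr rfl fun p _ => sum_congr rfl fun q _ => by ring
  have hint : ∀ p ∈ range (a + 1), ∀ q ∈ range (b + 1), Integrable (fun ω =>
      (∑ j ∈ s, Y j ω ^ 2) ^ p * (∑ j ∈ s, Y j ω) ^ q * Y i ω ^ (2 * (a - p) + (b - q))) μ := by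
    intro p hp q hq
    rw [mem_range] at hp hq
    exact ((indepFun_sum_sq_sum_of_notMem hY hind hi).comp (φ := fun x : ℝ × ℝ => x.1 ^ p * x.2 ^ q)
      (ψ := fun y => y ^ _) (by fun_prop) (by fun_prop)).integrable_mul
      (integrable_sum_sq_pow_mul_sum_pow hY hY4 s (by omega))
      (integrable_of_abs_le_pow (p := 4) (hY4 i) (by omega) (by fun_prop) fun ω => (abs_pow _ _).le)
  simp_rw [hexpand]
  rw [integral_finsetSum _ fun p hp =>
    integrable_finsetSum _ fun q hq => (hint p hp q hq).mul_const _]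
  refine sum_congr rfl fun p hp => ?_
  rw [integral_finsetSum _ fun q hq => (hint p hp q hq).mul_const _]
  refine sum_congr rfl fun q _ => ?_
  rw [integral_mul_const, integral_sum_sq_pow_mul_sum_pow_mul_pow hY hind hi]

variable [IsProbabilityMeasure μ] {c : ℕ → ℝ}

lemma integral_sum_eq_zero (hY4 : ∀ i, MemLp (Y i) 4 μ) (hc : ∀ i k, ∫ ω, Y i ω ^ k ∂μ = c k)
    (hc1 : c 1 = 0) (s : Finset ι) : ∫ ω, ∑ j ∈ s, Y j ω ∂μ = 0 := by
  rw [integral_finsetSum _ fun j _ => (hY4 j).integrable (by norm_num)]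
  exact sum_eq_zero fun j _ => by simpa [hc1] using hc j 1

lemma integral_sum_sq (hY4 : ∀ i, MemLp (Y i) 4 μ) (hc : ∀ i k, ∫ ω, Y i ω ^ k ∂μ = c k)
    (s : Finset ι) : ∫ ω, ∑ j ∈ s, Y j ω ^ 2 ∂μ = #s * c 2 := by
  rw [integral_finsetSum _ fun j _ => ((hY4 j).mono_exponent (by norm_num)).integrable_sq]
  simp only [hc, sum_const, nsmul_eq_mul]

lemma integral_sum_pow_two (hY : ∀ i, Measurable (Y i)) (hY4 : ∀ i, MemLp (Y i) 4 μ)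
    (hind : iIndepFun Y μ) (hc : ∀ i k, ∫ ω, Y i ω ^ k ∂μ = c k) (hc1 : c 1 = 0)
    (s : Finset ι) : ∫ ω, (∑ j ∈ s, Y j ω) ^ 2 ∂μ = #s * c 2 := by
  classical
  induction s using Finset.induction_on with
  | empty => simp
  | insert i s hi ih =>
    have h := integral_insert_sum_sq_pow_mul_sum_pow hY hY4 hind hi (a := 0) (b := 2) (by norm_num)
    have hc0 : c 0 = 1 := by simp [← hc i 0]
    simp only [sum_range_succ, range_one, sum_singleton, Nat.choose_zero_right, Nat.choose_self,
      Nat.choose_succ_self_right, Nat.cast_one, Nat.cast_ofNat, Nat.reduceAdd, Nat.add_one_sub_one,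
      tsub_zero, tsub_self, zero_tsub, pow_zero, pow_one, one_mul, mul_one, zero_mul, mul_zero,
      zero_add, add_zero, integral_const, probReal_univ, smul_eq_mul, hc, hc0, hc1] at h
    rw [h, ih, card_insert_of_notMem hi]
    push_cast
    ring

lemma integral_sum_pow_four (hY : ∀ i, Measurable (Y i)) (hY4 : ∀ i, MemLp (Y i) 4 μ)
    (hind : iIndepFun Y μ) (hc : ∀ i k, ∫ ω, Y i ω ^ k ∂μ = c k) (hc1 : c 1 = 0)
    (s : Finset ι) : ∫ ω, (∑ j ∈ s, Y j ω) ^ 4 ∂μ = #s * c 4 + 3 * #s * (#s - 1) * c 2 ^ 2 := by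
  classical
  induction s using Finset.induction_on with
  | empty => simp
  | insert i s hi ih =>
    have h := integral_insert_sum_sq_pow_mul_sum_pow hY hY4 hind hi (a := 0) (b := 4) (by norm_num)
    have hc0 : c 0 = 1 := by simp [← hc i 0]
    -- the unknown third moment `c 3` only occurs multiplied by `∫ ∑ j ∈ s, Y j = 0`
    simp only [sum_range_succ, range_one, sum_singleton, Nat.choose_zero_right,
      Nat.choose_one_right, Nat.choose_self, Nat.choose_succ_self_right,
      (by decide : Nat.choose 4 2 = 6), Nat.cast_one, Nat.cast_ofNat, Nat.reduceAdd, Nat.reduceSub,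
      Nat.add_one_sub_one, tsub_zero, tsub_self, zero_tsub, pow_zero, pow_one, one_mul, mul_one,
      zero_mul, mul_zero, zero_add, add_zero, integral_const, probReal_univ, smul_eq_mul, hc, hc0,
      hc1, integral_sum_eq_zero hY4 hc hc1, integral_sum_pow_two hY hY4 hind hc hc1] at h
    rw [h, ih, card_insert_of_notMem hi]
    push_cast
    ring

lemma integral_sum_sq_mul_sum_pow_two (hY : ∀ i, Measurable (Y i)) (hY4 : ∀ i, MemLp (Y i) 4 μ)
    (hind : iIndepFun Y μ) (hc : ∀ i k, ∫ ω, Y i ω ^ k ∂μ = c k) (hc1 : c 1 = 0)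
    (s : Finset ι) : ∫ ω, (∑ j ∈ s, Y j ω ^ 2) * (∑ j ∈ s, Y j ω) ^ 2 ∂μ
      = #s * c 4 + #s * (#s - 1) * c 2 ^ 2 := by
  classical
  induction s using Finset.induction_on with
  | empty => simp
  | insert i s hi ih =>
    have h := integral_insert_sum_sq_pow_mul_sum_pow hY hY4 hind hi (a := 1) (b := 2) (by norm_num)
    have hc0 : c 0 = 1 := by simp [← hc i 0]
    simp only [sum_range_succ, range_one, sum_singleton, Nat.choose_zero_right, Nat.choose_self,
      Nat.choose_succ_self_right, Nat.cast_one, Nat.cast_ofNat, Nat.reduceAdd, Nat.add_one_sub_one,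
      tsub_zero, tsub_self, pow_zero, pow_one, one_mul, mul_one, zero_mul, mul_zero, zero_add,
      add_zero, integral_const, probReal_univ, smul_eq_mul, hc, hc0, hc1,
      integral_sum_eq_zero hY4 hc hc1, integral_sum_sq hY4 hc,
      integral_sum_pow_two hY hY4 hind hc hc1] at h
    rw [h, ih, card_insert_of_notMem hi]
    push_cast
    ring

lemma integral_sum_sq_pow_two (hY : ∀ i, Measurable (Y i)) (hY4 : ∀ i, MemLp (Y i) 4 μ)
    (hind : iIndepFun Y μ) (hc : ∀ i k, ∫ ω, Y i ω ^ k ∂μ = c k)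
    (s : Finset ι) : ∫ ω, (∑ j ∈ s, Y j ω ^ 2) ^ 2 ∂μ = #s * c 4 + #s * (#s - 1) * c 2 ^ 2 := by
  classical
  induction s using Finset.induction_on with
  | empty => simp
  | insert i s hi ih =>
    have h := integral_insert_sum_sq_pow_mul_sum_pow hY hY4 hind hi (a := 2) (b := 0) (by norm_num)
    have hc0 : c 0 = 1 := by simp [← hc i 0]
    simp only [sum_range_succ, range_one, sum_singleton, Nat.choose_zero_right, Nat.choose_self,
      Nat.choose_succ_self_right, Nat.cast_one, Nat.cast_ofNat, Nat.reduceAdd, Nat.reduceMul,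
      Nat.add_one_sub_one, tsub_zero, tsub_self, zero_tsub, pow_zero, pow_one, one_mul, mul_one,
      mul_zero, zero_add, add_zero, integral_const, probReal_univ, smul_eq_mul, hc, hc0,
      integral_sum_sq hY4 hc] at h
    rw [h, ih, card_insert_of_notMem hi]
    push_cast
    ring

end PowerSums

noncomputable def sampleVariance {ι : Type*} [Fintype ι] (x : ι → ℝ) : ℝ :=
  (∑ i, (x i - (∑ j, x j) / Fintype.card ι) ^ 2) / (Fintype.card ι - 1)

section SampleVariance

variable {ι : Type*} [Fintype ι]

lemma sampleVariance_eq (x : ι → ℝ) : sampleVariance x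
    = (∑ i, x i ^ 2 - (∑ i, x i) ^ 2 / Fintype.card ι) / (Fintype.card ι - 1) := by
  unfold sampleVariance
  congr 1
  rcases eq_or_ne (Fintype.card ι : ℝ) 0 with hn | hn
  · simp [Fintype.card_eq_zero_iff.mp (by exact_mod_cast hn)]
  · simp only [sub_sq, sum_add_distrib, sum_sub_distrib, ← sum_mul, ← mul_sum, sum_const,
      card_univ, nsmul_eq_mul]
    field_simp
    ring

lemma sampleVariance_sub_const (x : ι → ℝ) (m : ℝ) :
    sampleVariance (fun i => x i - m) = sampleVariance x := by
  rcases isEmpty_or_nonempty ι with hι | hι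
  · simp [sampleVariance]
  · have hmean : (∑ j, (x j - m)) / Fintype.card ι = (∑ j, x j) / Fintype.card ι - m := by
      rw [sum_sub_distrib, sum_const, card_univ, nsmul_eq_mul]
      field_simp
    simp only [sampleVariance, hmean, sub_sub_sub_cancel_right]

lemma sampleVariance_sq_eq (x : ι → ℝ) : sampleVariance x ^ 2
    = ((∑ i, x i ^ 2) ^ 2 - 2 / Fintype.card ι * ((∑ i, x i ^ 2) * (∑ i, x i) ^ 2)
        + 1 / (Fintype.card ι : ℝ) ^ 2 * (∑ i, x i) ^ 4) / (Fintype.card ι - 1) ^ 2 := by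
  rw [sampleVariance_eq, div_pow]
  congr 1
  ring

end SampleVariance

section SampleVarianceMoments

variable {Ω ι : Type*} [MeasurableSpace Ω] {μ : Measure Ω} [IsProbabilityMeasure μ] [Fintype ι]
  {Y : ι → Ω → ℝ} {c : ℕ → ℝ}

lemma integral_sampleVariance (hY : ∀ i, Measurable (Y i)) (hY4 : ∀ i, MemLp (Y i) 4 μ)
    (hind : iIndepFun Y μ) (hc : ∀ i k, ∫ ω, Y i ω ^ k ∂μ = c k) (hc1 : c 1 = 0)
    (hn : 2 ≤ Fintype.card ι) :
    ∫ ω, sampleVariance (Y · ω) ∂μ = c 2 := by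
  have hn1 : (Fintype.card ι : ℝ) - 1 ≠ 0 := by
    have : (2 : ℝ) ≤ Fintype.card ι := by exact_mod_cast hn
    linarith
  have hQ : Integrable (fun ω => ∑ j, Y j ω ^ 2) μ :=
    integrable_finsetSum _ fun j _ => ((hY4 j).mono_exponent (by norm_num)).integrable_sq
  have hS2 : Integrable (fun ω => (∑ j, Y j ω) ^ 2) μ := by
    simpa using integrable_sum_sq_pow_mul_sum_pow hY hY4 univ (a := 0) (b := 2) (by norm_num)
  simp only [sampleVariance_eq]
  rw [integral_div, integral_sub hQ (hS2.div_const _), integral_div, integral_sum_sq hY4 hc,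
    integral_sum_pow_two hY hY4 hind hc hc1, card_univ]
  field_simp

lemma memLp_sampleVariance (hY : ∀ i, Measurable (Y i)) (hY4 : ∀ i, MemLp (Y i) 4 μ) :
    MemLp (fun ω => sampleVariance (Y · ω)) 2 μ := by
  have hQ2 : Integrable (fun ω => (∑ j, Y j ω ^ 2) ^ 2) μ := by
    simpa using integrable_sum_sq_pow_mul_sum_pow hY hY4 univ (a := 2) (b := 0) (by norm_num)
  have hQS2 : Integrable (fun ω => (∑ j, Y j ω ^ 2) * (∑ j, Y j ω) ^ 2) μ := by
    simpa using integrable_sum_sq_pow_mul_sum_pow hY hY4 univ (a := 1) (b := 2) (by norm_num)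
  have hS4 : Integrable (fun ω => (∑ j, Y j ω) ^ 4) μ := by
    simpa using integrable_sum_sq_pow_mul_sum_pow hY hY4 univ (a := 0) (b := 4) (by norm_num)
  refine (memLp_two_iff_integrable_sq (by unfold sampleVariance; fun_prop)).2 ?_
  simp only [sampleVariance_sq_eq]
  exact ((hQ2.sub (hQS2.const_mul _)).add (hS4.const_mul _)).div_const _

lemma integral_sampleVariance_sq (hY : ∀ i, Measurable (Y i)) (hY4 : ∀ i, MemLp (Y i) 4 μ)
    (hind : iIndepFun Y μ) (hc : ∀ i k, ∫ ω, Y i ω ^ k ∂μ = c k) (hc1 : c 1 = 0)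
    (hn : 2 ≤ Fintype.card ι) :
    ∫ ω, sampleVariance (Y · ω) ^ 2 ∂μ
      = c 4 / Fintype.card ι + (Fintype.card ι ^ 2 - 2 * Fintype.card ι + 3) * c 2 ^ 2
          / (Fintype.card ι * (Fintype.card ι - 1)) := by
  have hn1 : (Fintype.card ι : ℝ) - 1 ≠ 0 := by
    have : (2 : ℝ) ≤ Fintype.card ι := by exact_mod_cast hn
    linarith
  have hn0 : (Fintype.card ι : ℝ) ≠ 0 := by positivity
  have hQ2 : Integrable (fun ω => (∑ j, Y j ω ^ 2) ^ 2) μ := by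
    simpa using integrable_sum_sq_pow_mul_sum_pow hY hY4 univ (a := 2) (b := 0) (by norm_num)
  have hQS2 : Integrable (fun ω => (∑ j, Y j ω ^ 2) * (∑ j, Y j ω) ^ 2) μ := by
    simpa using integrable_sum_sq_pow_mul_sum_pow hY hY4 univ (a := 1) (b := 2) (by norm_num)
  have hS4 : Integrable (fun ω => (∑ j, Y j ω) ^ 4) μ := by
    simpa using integrable_sum_sq_pow_mul_sum_pow hY hY4 univ (a := 0) (b := 4) (by norm_num)
  have hdiff : Integrable (fun ω => (∑ j, Y j ω ^ 2) ^ 2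
      - 2 / Fintype.card ι * ((∑ j, Y j ω ^ 2) * (∑ j, Y j ω) ^ 2)) μ := hQ2.sub (hQS2.const_mul _)
  simp only [sampleVariance_sq_eq]
  rw [integral_div, integral_add hdiff (hS4.const_mul _), integral_sub hQ2 (hQS2.const_mul _),
    integral_const_mul, integral_const_mul,
    integral_sum_sq_pow_two hY hY4 hind hc, integral_sum_sq_mul_sum_pow_two hY hY4 hind hc hc1,
    integral_sum_pow_four hY hY4 hind hc hc1, card_univ]
  field_simp
  ring

lemma variance_sampleVariance (hY : ∀ i, Measurable (Y i)) (hY4 : ∀ i, MemLp (Y i) 4 μ)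
    (hind : iIndepFun Y μ) (hc : ∀ i k, ∫ ω, Y i ω ^ k ∂μ = c k) (hc1 : c 1 = 0)
    (hn : 2 ≤ Fintype.card ι) :
    variance (fun ω => sampleVariance (Y · ω)) μ
      = c 4 / Fintype.card ι - (Fintype.card ι - 3) * c 2 ^ 2
          / (Fintype.card ι * (Fintype.card ι - 1)) := by
  have hn1 : (Fintype.card ι : ℝ) - 1 ≠ 0 := by
    have : (2 : ℝ) ≤ Fintype.card ι := by exact_mod_cast hn
    linarith
  have hn0 : (Fintype.card ι : ℝ) ≠ 0 := by positivity
  rw [variance_eq_sub (memLp_sampleVariance hY hY4), Pi.pow_def,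
    integral_sampleVariance_sq hY hY4 hind hc hc1 hn, integral_sampleVariance hY hY4 hind hc hc1 hn]
  field_simp
  ring

end SampleVarianceMoments

lemma ofReal_one_sub_variance_div_sq_le_meas_lt {Ω : Type*} [MeasurableSpace Ω] {μ : Measure Ω}
    [IsProbabilityMeasure μ] {V : Ω → ℝ} (hV : MemLp V 2 μ) {c : ℝ} (hc : 0 < c) :
    ENNReal.ofReal (1 - variance V μ / c ^ 2) ≤ μ {ω | |V ω - μ[V]| < c} := by
  have hcompl : {ω | |V ω - μ[V]| < c}ᶜ = {ω | c ≤ |V ω - μ[V]|} := by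
    ext ω
    simp
  calc ENNReal.ofReal (1 - variance V μ / c ^ 2)
      = 1 - ENNReal.ofReal (variance V μ / c ^ 2) := by
        rw [ENNReal.ofReal_sub _ (div_nonneg (variance_nonneg _ _) (sq_nonneg _)),
          ENNReal.ofReal_one]
    _ ≤ 1 - μ {ω | |V ω - μ[V]| < c}ᶜ := by
        rw [hcompl]
        exact tsub_le_tsub_left (meas_ge_le_variance_div_sq hV hc) 1
    _ ≤ μ {ω | |V ω - μ[V]| < c} := by
        rw [tsub_le_iff_right, ← measure_univ (μ := μ), ← Set.union_compl_self]
        exact measure_union_le _ _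

lemma sqrt_div_sqrt_mem_Icc_of_abs_sub_lt {σ2 v ε : ℝ} (hσ2 : 0 < σ2) (hε : ε < 1)
    (h : |v - σ2| < ε * σ2) :
    √σ2 / √v ∈ Set.Icc (1 / √(1 + ε)) (1 / √(1 - ε)) := by
  obtain ⟨hlow, hup⟩ := abs_lt.mp h
  have hε0 : 0 < ε := by nlinarith
  have hv : 0 < v := by nlinarith
  rw [Set.mem_Icc, div_le_div_iff₀ (by positivity) (by positivity),
    div_le_div_iff₀ (by positivity) (Real.sqrt_pos.2 (by linarith)), one_mul,
    ← Real.sqrt_mul hσ2.le, ← Real.sqrt_mul hσ2.le]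
  constructor <;> apply Real.sqrt_le_sqrt <;> nlinarith

/-- **Stability of batch normalization.** For i.i.d. `X₁,…,Xₙ` (`n ≥ 2`) with variance
`σ² > 0`, finite fourth central moment `m₄` and kurtosis `κ = m₄/σ⁴`, letting
`σ_s = √S²` be the batch standard deviation, for every `0 < ε < 1`,
`Pr(1/√(1+ε) ≤ σ/σ_s ≤ 1/√(1−ε)) ≥ 1 − (1/ε²)(κ/n − (n−3)/(n(n−1)))`. -/
theorem batchnorm_ratio_concentration
    {Ω : Type*} [MeasurableSpace Ω] (μ : Measure Ω) [IsProbabilityMeasure μ]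
    (n : ℕ) (hn : 2 ≤ n) (X : Fin n → Ω → ℝ)
    (hmeas : ∀ i, Measurable (X i))
    (hindep : iIndepFun X μ)
    (ν : Measure ℝ) [IsProbabilityMeasure ν]
    (hident : ∀ i, μ.map (X i) = ν)
    (hL4 : MemLp id 4 ν)
    (m σ2 m4 κ : ℝ)
    (hm : m = ∫ x, x ∂ν)
    (hσ2 : σ2 = ∫ x, (x - m) ^ 2 ∂ν) (hσ2pos : 0 < σ2)
    (hm4 : m4 = ∫ x, (x - m) ^ 4 ∂ν)
    (hκ : κ = m4 / σ2 ^ 2)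
    (Xbar S2 σs : Ω → ℝ)
    (hXbar : ∀ ω, Xbar ω = (∑ i, X i ω) / n)
    (hS2 : ∀ ω, S2 ω = (∑ i, (X i ω - Xbar ω) ^ 2) / ((n : ℝ) - 1))
    (hσs : ∀ ω, σs ω = Real.sqrt (S2 ω))
    (ε : ℝ) (hε0 : 0 < ε) (hε1 : ε < 1) :
    ENNReal.ofReal
        (1 - (1 / ε ^ 2) * (κ / n - ((n : ℝ) - 3) / ((n : ℝ) * ((n : ℝ) - 1))))
      ≤ μ {ω | 1 / Real.sqrt (1 + ε) ≤ Real.sqrt σ2 / σs ω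
            ∧ Real.sqrt σ2 / σs ω ≤ 1 / Real.sqrt (1 - ε)} := by
  set Y : Fin n → Ω → ℝ := fun i ω => X i ω - m
  have hY : ∀ i, Measurable (Y i) := fun i => (hmeas i).sub_const m
  have hY4 : ∀ i, MemLp (Y i) 4 μ := fun i =>
    ((memLp_map_measure_iff aestronglyMeasurable_id (hmeas i).aemeasurable).1
      (by rwa [hident i])).sub (memLp_const m)
  have hind : iIndepFun Y μ := hindep.comp (fun _ x => x - m) fun _ => measurable_sub_const m
  have hc : ∀ i k, ∫ ω, Y i ω ^ k ∂μ = ∫ x, (x - m) ^ k ∂ν := fun i k => by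
    rw [← hident i, integral_map (hmeas i).aemeasurable (by fun_prop)]
  have hc1 : ∫ x, (x - m) ^ 1 ∂ν = 0 := hm ▸ centralMoment_one (X := fun x => x)
  have hcard : 2 ≤ Fintype.card (Fin n) := by simpa using hn
  have hS2Y : S2 = fun ω => sampleVariance (Y · ω) := by
    ext ω
    rw [sampleVariance_sub_const (X · ω), hS2, sampleVariance]
    simp [hXbar]
  have hmean : μ[S2] = σ2 := by
    rw [hS2Y, integral_sampleVariance hY hY4 hind hc hc1 hcard, hσ2]
  have hvar : variance S2 μ / (ε * σ2) ^ 2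
      = 1 / ε ^ 2 * (κ / n - ((n : ℝ) - 3) / ((n : ℝ) * ((n : ℝ) - 1))) := by
    rw [hS2Y, variance_sampleVariance hY hY4 hind hc hc1 hcard, hκ, hm4, ← hσ2]
    simp only [Fintype.card_fin]
    field_simp
  calc _ = ENNReal.ofReal (1 - variance S2 μ / (ε * σ2) ^ 2) := by rw [hvar]
    _ ≤ μ {ω | |S2 ω - μ[S2]| < ε * σ2} :=
      ofReal_one_sub_variance_div_sq_le_meas_lt (hS2Y ▸ memLp_sampleVariance hY hY4)
        (by positivity)
    _ ≤ _ := measure_mono fun ω hω => by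
      rw [Set.mem_ofPred_eq, hσs]
      exact sqrt_div_sqrt_mem_Icc_of_abs_sub_lt hσ2pos hε1 (hmean ▸ hω)
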